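/- arXiv:1405.7747 — 9 statements merged into one kernel-verified Lean document; each statement's English description precedes it below -/
import Mathlib

section
/- Let H ≥ 1, let n_1,…,n_H be positive reals with Σ_h n_h = 1, let A > 0, R > 0, s > 0, and f_1,…,f_H ∈ ℝ. Then: (i) there exists a unique x ∈ ℝ such that Σ_{h=1}^{H} n_h·max{0, (f_h − R·x)/A + s} = s; (ii) if x_U denotes the unique solution of the unconstrained clearing equation Σ_h n_h·((f_h − R·x)/A + s) = s, then x ≥ x_U, with strict inequality whenever (f_h − R·x_U)/A + s < 0 for some h. -/
/-!
Each trader's constrained demand `max 0 (·)` is continuous and antitone in the price deviation,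
and strictly decreasing wherever it is positive; hence so is the aggregate demand `d`. It exceeds
`s` far to the left and vanishes far to the right, so the intermediate value theorem gives a
clearing deviation, and strict decrease on `{d > 0}` makes it unique because `s > 0`. Truncating
at `0` can only raise demand, so `d x_U ≥ s`, which forces `x ≥ x_U`, strictly if some type
would be short at `x_U`.
-/

open Filter

section AggregateDemand

variable {ι : Type*} [Fintype ι] {w : ι → ℝ} {g : ι → ℝ → ℝ}

def aggregateDemand (w : ι → ℝ) (g : ι → ℝ → ℝ) (x : ℝ) : ℝ :=
  ∑ i, w i * max 0 (g i x)

theorem continuous_aggregateDemand (hg : ∀ i, Continuous (g i)) :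
    Continuous (aggregateDemand w g) :=
  continuous_finsetSum _ fun i _ => continuous_const.mul (continuous_const.max (hg i))

theorem aggregateDemand_antitone (hw : ∀ i, 0 ≤ w i) (hg : ∀ i, Antitone (g i)) :
    Antitone (aggregateDemand w g) := fun _ _ hxy =>
  Finset.sum_le_sum fun i _ => mul_le_mul_of_nonneg_left (max_le_max le_rfl (hg i hxy)) (hw i)

theorem aggregateDemand_lt_of_lt (hw : ∀ i, 0 ≤ w i) (hg : ∀ i, StrictAnti (g i)) {x y : ℝ}
    (hxy : x < y) (hy : 0 < aggregateDemand w g y) :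
    aggregateDemand w g y < aggregateDemand w g x := by
  have hy' : ∑ _i : ι, (0 : ℝ) < ∑ i, w i * max 0 (g i y) := by
    rwa [Finset.sum_const_zero]
  obtain ⟨i, -, hi⟩ := Finset.exists_lt_of_sum_lt hy'
  have hwi : 0 < w i := pos_of_mul_pos_left hi (le_max_left _ _)
  have hgi : 0 < g i y := by simpa using pos_of_mul_pos_right hi (hw i)
  refine Finset.sum_lt_sum (fun j _ => mul_le_mul_of_nonneg_left
    (max_le_max le_rfl ((hg j).antitone hxy.le)) (hw j)) ⟨i, Finset.mem_univ i, ?_⟩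
  rw [max_eq_right hgi.le]
  exact mul_lt_mul_of_pos_left ((hg i hxy).trans_le (le_max_right _ _)) hwi

theorem le_of_aggregateDemand_le (hw : ∀ i, 0 ≤ w i) (hg : ∀ i, StrictAnti (g i)) {x y : ℝ}
    (hy : 0 < aggregateDemand w g y) (h : aggregateDemand w g x ≤ aggregateDemand w g y) :
    y ≤ x :=
  not_lt.1 fun hxy => (aggregateDemand_lt_of_lt hw hg hxy hy).not_ge h

theorem sum_mul_le_aggregateDemand (hw : ∀ i, 0 ≤ w i) (x : ℝ) :
    ∑ i, w i * g i x ≤ aggregateDemand w g x :=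
  Finset.sum_le_sum fun i _ => mul_le_mul_of_nonneg_left (le_max_right _ _) (hw i)

theorem sum_mul_lt_aggregateDemand (hw : ∀ i, 0 ≤ w i) {x : ℝ} {i : ι} (hwi : 0 < w i)
    (hi : g i x < 0) : ∑ i, w i * g i x < aggregateDemand w g x :=
  Finset.sum_lt_sum (fun j _ => mul_le_mul_of_nonneg_left (le_max_right _ _) (hw j))
    ⟨i, Finset.mem_univ i, mul_lt_mul_of_pos_left (hi.trans_le (le_max_left _ _)) hwi⟩

theorem exists_aggregateDemand_eq (hsum : ∑ i, w i = 1) (hw : ∀ i, 0 ≤ w i)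
    (hg : ∀ i, Continuous (g i)) {c : ℝ} (hc : 0 ≤ c) (hbot : ∀ᶠ x in atBot, ∀ i, c ≤ g i x)
    (htop : ∀ᶠ x in atTop, ∀ i, g i x ≤ 0) : ∃ x, aggregateDemand w g x = c := by
  obtain ⟨x₀, hx₀⟩ := hbot.exists
  obtain ⟨x₁, hx₁⟩ := htop.exists
  have hle : aggregateDemand w g x₁ ≤ c := by
    simp only [aggregateDemand, max_eq_left (hx₁ _), mul_zero, Finset.sum_const_zero, hc]
  have hge : c ≤ aggregateDemand w g x₀ :=
    calc c = ∑ i, w i * c := by rw [← Finset.sum_mul, hsum, one_mul]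
      _ ≤ aggregateDemand w g x₀ := Finset.sum_le_sum fun i _ =>
          mul_le_mul_of_nonneg_left ((hx₀ i).trans (le_max_right _ _)) (hw i)
  exact intermediate_value_univ x₁ x₀ (continuous_aggregateDemand hg) ⟨hle, hge⟩

end AggregateDemand

section TraderDemand

variable {A R s : ℝ}

noncomputable def traderDemand (A R s f x : ℝ) : ℝ := (f - R * x) / A + s

theorem continuous_traderDemand (f : ℝ) : Continuous (traderDemand A R s f) := by
  unfold traderDemand
  fun_prop

theorem traderDemand_strictAnti (hA : 0 < A) (hR : 0 < R) (f : ℝ) :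
    StrictAnti (traderDemand A R s f) := fun x y hxy => by
  unfold traderDemand
  gcongr

theorem eventually_traderDemand_nonpos (hA : 0 < A) (hR : 0 < R) (f : ℝ) :
    ∀ᶠ x in atTop, traderDemand A R s f x ≤ 0 :=
  (eventually_ge_atTop ((f + A * s) / R)).mono fun x hx => by
    rw [div_le_iff₀ hR] at hx
    rw [traderDemand, div_add' _ _ _ hA.ne']
    exact div_nonpos_of_nonpos_of_nonneg (by linarith) hA.le

theorem eventually_le_traderDemand (hA : 0 < A) (hR : 0 < R) (f : ℝ) :
    ∀ᶠ x in atBot, s ≤ traderDemand A R s f x :=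
  (eventually_le_atBot (f / R)).mono fun x hx => by
    rw [le_div_iff₀ hR] at hx
    rw [traderDemand, le_add_iff_nonneg_left]
    exact div_nonneg (by linarith) hA.le

end TraderDemand

theorem ared_constrained_clearing_general
    (H : ℕ)
    (n f : Fin H → ℝ)
    (hn : ∀ h, 0 < n h) (hsum : ∑ h, n h = 1)
    (A R s : ℝ) (hA : 0 < A) (hR : 0 < R) (hs : 0 < s) :
    (∃! x : ℝ, ∑ h, n h * max 0 ((f h - R * x) / A + s) = s) ∧
      ∀ x xU : ℝ,
        (∑ h, n h * max 0 ((f h - R * x) / A + s) = s) →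
        (∑ h, n h * ((f h - R * xU) / A + s) = s) →
        xU ≤ x ∧ ((∃ h, (f h - R * xU) / A + s < 0) → xU < x) := by
  set g : Fin H → ℝ → ℝ := fun h => traderDemand A R s (f h)
  have hw : ∀ h, 0 ≤ n h := fun h => (hn h).le
  have hg : ∀ h, StrictAnti (g h) := fun h => traderDemand_strictAnti hA hR (f h)
  obtain ⟨x₀, hx₀⟩ := exists_aggregateDemand_eq hsum hw (fun h => continuous_traderDemand (f h))
    hs.le (eventually_all.2 fun h => eventually_le_traderDemand hA hR (f h))
    (eventually_all.2 fun h => eventually_traderDemand_nonpos hA hR (f h))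
  refine ⟨⟨x₀, hx₀, fun y (hy : aggregateDemand n g y = s) => ?_⟩,
    fun x xU (hx : aggregateDemand n g x = s) (hxU : ∑ h, n h * g h xU = s) => ⟨?_, ?_⟩⟩
  · exact le_antisymm (le_of_aggregateDemand_le hw hg (hy ▸ hs) (hx₀.trans hy.symm).le)
      (le_of_aggregateDemand_le hw hg (hx₀ ▸ hs) (hy.trans hx₀.symm).le)
  · have hge : s ≤ aggregateDemand n g xU := hxU ▸ sum_mul_le_aggregateDemand hw xU
    exact le_of_aggregateDemand_le hw hg (hs.trans_le hge) (hx.trans_le hge)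
  · rintro ⟨h, hh⟩
    have hgt : s < aggregateDemand n g xU := hxU ▸ sum_mul_lt_aggregateDemand hw (hn h) hh
    exact (aggregateDemand_antitone hw fun h => (hg h).antitone).reflect_lt (hx.trans_lt hgt)

/-- Under the uptick rule, the constrained market clearing equation
`∑ h, n h * max 0 ((f h - R*x)/A + s) = s` has a unique solution `x`, which is
at least as large as the unconstrained clearing deviation `x_U`, and strictly
larger whenever some trader type would go short at `x_U`. -/
theorem ared_constrained_clearing
    (H : ℕ) (hH : 1 ≤ H)
    (n f : Fin H → ℝ)
    (hn : ∀ h, 0 < n h) (hsum : ∑ h, n h = 1)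
    (A R s : ℝ) (hA : 0 < A) (hR : 0 < R) (hs : 0 < s) :
    (∃! x : ℝ, ∑ h, n h * max 0 ((f h - R * x) / A + s) = s) ∧
      ∀ x xU : ℝ,
        (∑ h, n h * max 0 ((f h - R * x) / A + s) = s) →
        (∑ h, n h * ((f h - R * xU) / A + s) = s) →
        xU ≤ x ∧ ((∃ h, (f h - R * xU) / A + s < 0) → xU < x) :=
  ared_constrained_clearing_general H n f hn hsum A R s hA hR hs
end

section
/- Let R > 1, 0 ≤ v < 1, R < g < 2R − v, and C > 0. For β ≥ 0 define m̄⁰(β) = tanh(−β·C/2) and λ⁰(β) = ((1 + m̄⁰(β))·v + (1 − m̄⁰(β))·g)/(2R). Then λ⁰ is strictly increasing in β, and λ⁰(β) = 1 if and only if β = β_TR := (1/C)·log((R−v)/(g−R)) > 0; moreover λ⁰(β) < 1 for 0 ≤ β < β_TR and λ⁰(β) > 1 for β > β_TR. -/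
/-!
Since `tanh` is odd, `λ⁰(β) = ((v + g) + (g - v) tanh (βC/2)) / (2R)` is a strictly increasing
affine function of `tanh (βC/2)`, hence of `β`. It equals `1` exactly when
`tanh (βC/2) = t := (2R - v - g)/(g - v) ∈ (-1, 1)`, i.e. at `βC/2 = artanh t`, and
`artanh t = ½ log ((1 + t)/(1 - t)) = ½ log ((R - v)/(g - R))` gives the formula for `β_TR`.
Everything else follows from strict monotonicity.
-/

open Real

theorem Real.tanh_le_tanh_iff {x y : ℝ} : tanh x ≤ tanh y ↔ x ≤ y := by
  rw [← artanh_le_artanh_iff ⟨neg_one_lt_tanh x, tanh_lt_one x⟩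
    ⟨neg_one_lt_tanh y, tanh_lt_one y⟩, artanh_tanh, artanh_tanh]

theorem Real.strictMono_tanh : StrictMono tanh :=
  strictMono_of_le_iff_le fun _ _ ↦ tanh_le_tanh_iff.symm

noncomputable def fundamentalEigenvalue (R v g C β : ℝ) : ℝ :=
  ((1 + tanh (-β * C / 2)) * v + (1 - tanh (-β * C / 2)) * g) / (2 * R)

section

variable {R v g C : ℝ}

theorem fundamentalEigenvalue_eq (β : ℝ) :
    fundamentalEigenvalue R v g C β = ((v + g) + (g - v) * tanh (β * C / 2)) / (2 * R) := by
  rw [fundamentalEigenvalue, neg_mul, neg_div, tanh_neg]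
  ring

theorem strictMono_fundamentalEigenvalue (hR : 0 < R) (hvg : v < g) (hC : 0 < C) :
    StrictMono (fundamentalEigenvalue R v g C) := by
  intro a b hab
  rw [fundamentalEigenvalue_eq, fundamentalEigenvalue_eq]
  have htanh : tanh (a * C / 2) < tanh (b * C / 2) := strictMono_tanh (by gcongr)
  gcongr

theorem fundamentalEigenvalue_transcritical (hR : R ≠ 0) (hvR : v < R) (hRg : R < g)
    (hC : C ≠ 0) :
    fundamentalEigenvalue R v g C ((1 / C) * log ((R - v) / (g - R))) = 1 := by
  set t := (2 * R - v - g) / (g - v) with ht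
  have hgv : 0 < g - v := by linarith
  have ht_mem : t ∈ Set.Ioo (-1) 1 := by
    constructor
    · rw [lt_div_iff₀ hgv]; linarith
    · rw [div_lt_one hgv]; linarith
  have hratio : (1 + t) / (1 - t) = (R - v) / (g - R) := by
    rw [ht, one_add_div hgv.ne', one_sub_div hgv.ne', div_div_div_cancel_right₀ hgv.ne',
      show g - v + (2 * R - v - g) = 2 * (R - v) by ring,
      show g - v - (2 * R - v - g) = 2 * (g - R) by ring, mul_div_mul_left _ _ two_ne_zero]
  have harg : (1 / C) * log ((R - v) / (g - R)) * C / 2 = artanh t := by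
    rw [artanh_eq_half_log (Set.Ioo_subset_Icc_self ht_mem), hratio]
    field_simp
  rw [fundamentalEigenvalue_eq, harg, tanh_artanh ht_mem, ht, mul_div_cancel₀ _ hgv.ne',
    div_eq_one_iff_eq (mul_ne_zero two_ne_zero hR)]
  ring

end

theorem ared_transcritical_value_general
    (R v g C : ℝ) (hR : 1 < R)
    (hgR : R < g) (hg2 : g < 2 * R - v) (hC : 0 < C)
    (lam : ℝ → ℝ)
    (hlam : ∀ β, lam β =
      ((1 + Real.tanh (-β * C / 2)) * v +
        (1 - Real.tanh (-β * C / 2)) * g) / (2 * R))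
    (βTR : ℝ) (hβTR : βTR = (1 / C) * Real.log ((R - v) / (g - R))) :
    StrictMonoOn lam (Set.Ici 0) ∧
      0 < βTR ∧
      (∀ β : ℝ, 0 ≤ β → (lam β = 1 ↔ β = βTR)) ∧
      (∀ β : ℝ, 0 ≤ β → β < βTR → lam β < 1) ∧
      (∀ β : ℝ, βTR < β → 1 < lam β) := by
  obtain rfl : lam = fundamentalEigenvalue R v g C := funext hlam
  have hmono : StrictMono (fundamentalEigenvalue R v g C) :=
    strictMono_fundamentalEigenvalue (by linarith) (by linarith) hC
  have hcross : fundamentalEigenvalue R v g C βTR = 1 :=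
    hβTR ▸ fundamentalEigenvalue_transcritical (by linarith : 0 < R).ne' (by linarith) hgR hC.ne'
  have hpos : 0 < βTR := by
    rw [hβTR]
    exact mul_pos (one_div_pos.2 hC)
      (log_pos ((one_lt_div (sub_pos.2 hgR)).2 (by linarith)))
  refine ⟨hmono.strictMonoOn _, hpos, fun β _ ↦ ?_, fun β _ h ↦ ?_, fun β h ↦ ?_⟩
  · rw [← hcross, hmono.injective.eq_iff]
  · exact hcross ▸ hmono h
  · exact hcross ▸ hmono h

/-- The transcritical bifurcation value in Lemma 3: the nonzero eigenvalue
`λ⁰(β) = ((1+tanh(-βC/2))v + (1-tanh(-βC/2))g)/(2R)` at the fundamental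
equilibrium is strictly increasing in `β ≥ 0`, crosses the value 1 exactly at
`β_TR = (1/C) log((R-v)/(g-R)) > 0`, being smaller than 1 before and larger
than 1 after. -/
theorem ared_transcritical_value
    (R v g C : ℝ) (hR : 1 < R) (hv0 : 0 ≤ v) (hv1 : v < 1)
    (hgR : R < g) (hg2 : g < 2 * R - v) (hC : 0 < C)
    (lam : ℝ → ℝ)
    (hlam : ∀ β, lam β =
      ((1 + Real.tanh (-β * C / 2)) * v +
        (1 - Real.tanh (-β * C / 2)) * g) / (2 * R))
    (βTR : ℝ) (hβTR : βTR = (1 / C) * Real.log ((R - v) / (g - R))) :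
    StrictMonoOn lam (Set.Ici 0) ∧
      0 < βTR ∧
      (∀ β : ℝ, 0 ≤ β → (lam β = 1 ↔ β = βTR)) ∧
      (∀ β : ℝ, 0 ≤ β → β < βTR → lam β < 1) ∧
      (∀ β : ℝ, βTR < β → 1 < lam β) :=
  ared_transcritical_value_general R v g C hR hgR hg2 hC lam hlam βTR hβTR
end

section
/- Let R > 1, 0 ≤ v < 1, R < g < 2R − v, A > 0, s > 0, C > 0 and β > 0. Set m̄ = 1 − 2(R−v)/(g−v), x_LP = A·s/(2(R−1)), β_TR = (1/C)·log((R−v)/(g−R)), and β_LP = β_TR·(1 + A·s²·(g−v)/(4C(R−1)))^{−1}. Then the equilibrium equation tanh(−(β/2)·((−(R−1)·x + A·s)·((g−v)/A)·x + C)) = m̄ in the unknown x ∈ ℝ has: no real solution if 0 < β < β_LP; the unique solution x = x_LP if β = β_LP; and exactly the two solutions x^{(±)} = x_LP ± sqrt((x_LP² + A·C/((R−1)(g−v)))·(1 − β_LP/β)) if β > β_LP. -/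
/-!
Since `tanh` is a bijection `ℝ → (-1, 1)`, the equilibrium equation says that its argument
equals `artanh m̄ = -½ log ((R - v)/(g - R)) = -C β_TR / 2`. This condition is quadratic in `x`, and
completing the square turns it into `(x - x_LP)² = D (1 - β_LP / β)` with
`D = x_LP² + A C / ((R - 1)(g - v)) > 0`; the identity `D β_LP = A C β_TR / ((R - 1)(g - v))`
is what makes the constant term come out in this form. The sign of `1 - β_LP / β` then decides
between no, one and two solutions.
-/

open Real Set

lemma Real.tanh_eq_iff_eq_artanh {a m : ℝ} (hm : m ∈ Ioo (-1) 1) :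
    tanh a = m ↔ a = artanh m :=
  ⟨fun h ↦ h ▸ (artanh_tanh a).symm, fun h ↦ h ▸ tanh_artanh hm⟩

lemma one_sub_two_mul_div_mem_Ioo {p q : ℝ} (hp : 0 < p) (hpq : p < q) :
    1 - 2 * p / q ∈ Ioo (-1) 1 := by
  have hq : 0 < q := hp.trans hpq
  constructor
  · have : p / q < 1 := (div_lt_one hq).mpr hpq
    rw [mul_div_assoc]; linarith
  · have : 0 < p / q := div_pos hp hq
    rw [mul_div_assoc]; linarith

lemma Real.artanh_one_sub_two_mul_div {p q : ℝ} (hp : 0 < p) (hpq : p < q) :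
    artanh (1 - 2 * p / q) = -(log (p / (q - p)) / 2) := by
  have hq : q ≠ 0 := (hp.trans hpq).ne'
  have hqp : q - p ≠ 0 := (sub_pos.mpr hpq).ne'
  have hratio : (1 + (1 - 2 * p / q)) / (1 - (1 - 2 * p / q)) = (p / (q - p))⁻¹ := by
    field_simp
    ring
  rw [artanh_eq_half_log (Ioo_subset_Icc_self (one_sub_two_mul_div_mem_Ioo hp hpq)), hratio,
    log_inv]
  ring

lemma sq_sub_eq_iff_of_nonneg {x a M : ℝ} (hM : 0 ≤ M) :
    (x - a) ^ 2 = M ↔ x = a + √M ∨ x = a - √M := by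
  rw [← sq_sqrt hM, sq_eq_sq_iff_eq_or_eq_neg, sq_sqrt hM]
  constructor <;> rintro (h | h) <;> [left; right; left; right] <;> linarith

section
variable {R v g A s C β βTR βLP xLP : ℝ}

lemma ared_D_mul_βLP (hR : 0 < R - 1) (hgv : 0 < g - v) (hA : 0 < A) (hC : 0 < C)
    (hxLP : xLP = A * s / (2 * (R - 1)))
    (hβLP : βLP = βTR * (1 + A * s ^ 2 * (g - v) / (4 * C * (R - 1)))⁻¹) :
    (xLP ^ 2 + A * C / ((R - 1) * (g - v))) * βLP = A * C * βTR / ((R - 1) * (g - v)) := by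
  have hκ : 0 < 1 + A * s ^ 2 * (g - v) / (4 * C * (R - 1)) := by positivity
  rw [hxLP, hβLP]
  field_simp
  ring

lemma ared_arg_complete_square (hR : 0 < R - 1) (hgv : 0 < g - v) (hA : 0 < A) (hC : 0 < C)
    (hβ : β ≠ 0)
    (hxLP : xLP = A * s / (2 * (R - 1)))
    (hβLP : βLP = βTR * (1 + A * s ^ 2 * (g - v) / (4 * C * (R - 1)))⁻¹) (x : ℝ) :
    -(β / 2) * ((-(R - 1) * x + A * s) * ((g - v) / A) * x + C) + C * βTR / 2 =
      β * (R - 1) * (g - v) / (2 * A) *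
        ((x - xLP) ^ 2 - (xLP ^ 2 + A * C / ((R - 1) * (g - v))) * (1 - βLP / β)) := by
  have hD : (xLP ^ 2 + A * C / ((R - 1) * (g - v))) * (1 - βLP / β) =
      xLP ^ 2 + A * C / ((R - 1) * (g - v)) - A * C * βTR / ((R - 1) * (g - v)) / β := by
    rw [← ared_D_mul_βLP hR hgv hA hC hxLP hβLP]
    ring
  rw [hD, hxLP]
  field_simp
  ring

lemma ared_equilibrium_iff {mbar : ℝ} (hR : 1 < R) (hv1 : v < 1) (hgR : R < g) (hA : 0 < A)
    (hC : 0 < C) (hβ : 0 < β) (hmbar : mbar = 1 - 2 * (R - v) / (g - v))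
    (hxLP : xLP = A * s / (2 * (R - 1))) (hβTR : βTR = (1 / C) * log ((R - v) / (g - R)))
    (hβLP : βLP = βTR * (1 + A * s ^ 2 * (g - v) / (4 * C * (R - 1)))⁻¹) (x : ℝ) :
    tanh (-(β / 2) * ((-(R - 1) * x + A * s) * ((g - v) / A) * x + C)) = mbar ↔
      (x - xLP) ^ 2 = (xLP ^ 2 + A * C / ((R - 1) * (g - v))) * (1 - βLP / β) := by
  have hR1 : 0 < R - 1 := sub_pos.mpr hR
  have hRv : 0 < R - v := by linarith
  have hRg : R - v < g - v := by linarith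
  have hgv : 0 < g - v := hRv.trans hRg
  have hlog : log ((R - v) / (g - v - (R - v))) = C * βTR := by
    rw [hβTR, sub_sub_sub_cancel_right]
    field_simp
  rw [hmbar, tanh_eq_iff_eq_artanh (one_sub_two_mul_div_mem_Ioo hRv hRg),
    artanh_one_sub_two_mul_div hRv hRg, hlog, eq_neg_iff_add_eq_zero,
    ared_arg_complete_square hR1 hgv hA hC hβ.ne' hxLP hβLP, mul_eq_zero, sub_eq_zero,
    or_iff_right (by positivity)]

end

theorem ared_saddle_node_general
    (R v g A s C β : ℝ) (hR : 1 < R) (hv1 : v < 1)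
    (hgR : R < g)
    (hA : 0 < A) (hC : 0 < C) (hβ : 0 < β)
    (mbar xLP βTR βLP : ℝ)
    (hmbar : mbar = 1 - 2 * (R - v) / (g - v))
    (hxLP : xLP = A * s / (2 * (R - 1)))
    (hβTR : βTR = (1 / C) * Real.log ((R - v) / (g - R)))
    (hβLP : βLP = βTR * (1 + A * s ^ 2 * (g - v) / (4 * C * (R - 1)))⁻¹) :
    (β < βLP → ¬ ∃ x : ℝ,
        Real.tanh (-(β / 2) *
          ((-(R - 1) * x + A * s) * ((g - v) / A) * x + C)) = mbar) ∧
    (β = βLP → ∀ x : ℝ,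
        Real.tanh (-(β / 2) *
          ((-(R - 1) * x + A * s) * ((g - v) / A) * x + C)) = mbar ↔
        x = xLP) ∧
    (βLP < β → ∀ x : ℝ,
        Real.tanh (-(β / 2) *
          ((-(R - 1) * x + A * s) * ((g - v) / A) * x + C)) = mbar ↔
        (x = xLP + Real.sqrt ((xLP ^ 2 + A * C / ((R - 1) * (g - v))) *
            (1 - βLP / β)) ∨
         x = xLP - Real.sqrt ((xLP ^ 2 + A * C / ((R - 1) * (g - v))) *
            (1 - βLP / β)))) := by
  have hD : 0 < xLP ^ 2 + A * C / ((R - 1) * (g - v)) := by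
    have : 0 < (R - 1) * (g - v) := mul_pos (by linarith) (by linarith)
    positivity
  simp only [ared_equilibrium_iff hR hv1 hgR hA hC hβ hmbar hxLP hβTR hβLP]
  refine ⟨fun hlt ⟨x, hx⟩ ↦ ?_, fun heq x ↦ ?_, fun hlt x ↦ ?_⟩
  · have : 1 - βLP / β < 0 := sub_neg.mpr ((one_lt_div hβ).mpr hlt)
    exact (mul_neg_of_pos_of_neg hD this).not_ge (hx ▸ sq_nonneg _)
  · rw [← heq, div_self hβ.ne', sub_self, mul_zero, sq_eq_zero_iff, sub_eq_zero]
  · exact sq_sub_eq_iff_of_nonneg (mul_nonneg hD.le (sub_nonneg.mpr ((div_le_one hβ).mpr hlt.le)))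

/-- The saddle-node (limit point) bifurcation of Lemma 3: the non-fundamental
equilibrium equation has no solution for `β < β_LP`, the single solution
`x_LP` at `β = β_LP`, and exactly the two solutions `x^{(±)}` for `β > β_LP`. -/
theorem ared_saddle_node
    (R v g A s C β : ℝ) (hR : 1 < R) (hv0 : 0 ≤ v) (hv1 : v < 1)
    (hgR : R < g) (hg2 : g < 2 * R - v)
    (hA : 0 < A) (hs : 0 < s) (hC : 0 < C) (hβ : 0 < β)
    (mbar xLP βTR βLP : ℝ)
    (hmbar : mbar = 1 - 2 * (R - v) / (g - v))
    (hxLP : xLP = A * s / (2 * (R - 1)))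
    (hβTR : βTR = (1 / C) * Real.log ((R - v) / (g - R)))
    (hβLP : βLP = βTR * (1 + A * s ^ 2 * (g - v) / (4 * C * (R - 1)))⁻¹) :
    (β < βLP → ¬ ∃ x : ℝ,
        Real.tanh (-(β / 2) *
          ((-(R - 1) * x + A * s) * ((g - v) / A) * x + C)) = mbar) ∧
    (β = βLP → ∀ x : ℝ,
        Real.tanh (-(β / 2) *
          ((-(R - 1) * x + A * s) * ((g - v) / A) * x + C)) = mbar ↔
        x = xLP) ∧
    (βLP < β → ∀ x : ℝ,
        Real.tanh (-(β / 2) *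
          ((-(R - 1) * x + A * s) * ((g - v) / A) * x + C)) = mbar ↔
        (x = xLP + Real.sqrt ((xLP ^ 2 + A * C / ((R - 1) * (g - v))) *
            (1 - βLP / β)) ∨
         x = xLP - Real.sqrt ((xLP ^ 2 + A * C / ((R - 1) * (g - v))) *
            (1 - βLP / β)))) :=
  ared_saddle_node_general R v g A s C β hR hv1 hgR hA hC hβ mbar xLP βTR βLP hmbar hxLP hβTR hβLP
end

section
/- Let R > 1, 0 ≤ v < 1, g > 2R − v human, and C > 0. Then for every β ≥ 0, λ⁰(β) = ((1 + tanh(−βC/2))·v + (1 − tanh(−βC/2))·g)/(2R) > 1; i.e., the fundamental equilibrium is unstable for every intensity of choice. -/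
/-!
For `β ≥ 0` the tanh weight `m = tanh (-β C / 2)` is nonpositive, so the eigenvalue's numerator
`(1 + m) v + (1 - m) g = v + g + m (v - g)` is at least `v + g` (as `v ≤ g`), and `v + g > 2 R`
is exactly the case assumption.
-/

theorem Real.tanh_nonpos {x : ℝ} (hx : x ≤ 0) : Real.tanh x ≤ 0 := by
  rw [Real.tanh_eq_sinh_div_cosh]
  exact div_nonpos_of_nonpos_of_nonneg (Real.sinh_nonpos_iff.2 hx) (Real.cosh_pos x).le

theorem add_le_one_add_mul_add_one_sub_mul {m v g : ℝ} (hm : m ≤ 0) (hvg : v ≤ g) :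
    v + g ≤ (1 + m) * v + (1 - m) * g := by
  nlinarith

theorem ared_fundamental_unstable_general
    (R v g C : ℝ) (hR : 1 < R) (hv1 : v < 1)
    (hg : g > 2 * R - v) (hC : 0 < C) :
    ∀ β : ℝ, 0 ≤ β →
      ((1 + Real.tanh (-β * C / 2)) * v +
        (1 - Real.tanh (-β * C / 2)) * g) / (2 * R) > 1 := by
  intro β hβ
  have hm : Real.tanh (-β * C / 2) ≤ 0 :=
    Real.tanh_nonpos (by nlinarith [mul_nonneg hβ hC.le])
  have hvg : v ≤ g := by linarith
  rw [gt_iff_lt, one_lt_div (by linarith)]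
  linarith [add_le_one_add_mul_add_one_sub_mul hm hvg]

/-- Part 3 of Lemma 3 (case `g > 2R - v`): the nonzero eigenvalue at the
fundamental equilibrium exceeds 1 for every intensity of choice `β ≥ 0`, so
the fundamental equilibrium is unstable for every `β`. -/
theorem ared_fundamental_unstable
    (R v g C : ℝ) (hR : 1 < R) (hv0 : 0 ≤ v) (hv1 : v < 1)
    (hg : g > 2 * R - v) (hC : 0 < C) :
    ∀ β : ℝ, 0 ≤ β →
      ((1 + Real.tanh (-β * C / 2)) * v +
        (1 - Real.tanh (-β * C / 2)) * g) / (2 * R) > 1 :=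
  ared_fundamental_unstable_general R v g C hR hv1 hg hC
end

section
/- Let R > 1, g > R², 0 ≤ v < g, A > 0, s ≥ 0, C > 0 and x₀ > 0, and define x_t = x₀·(g/R)^t for t ≥ 0. Then x_t → +∞ as t → ∞, and for every t ≥ 1 the switching quantity (R·x_{t−1} − x_t − A·s)·((g−v)/A)·x_{t−1} is strictly negative, in particular strictly less than C. Hence, in the limit of infinite intensity of choice, an orbit starting at x₀ > 0 with all traders being chartists never triggers a switch to the fundamental strategy, and the price deviation diverges. -/
/-!
Since `g > R²`, the chartist growth factor `g / R` exceeds `R > 1`. The orbit therefore grows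
geometrically, and `R x_{t-1} - x_t = (R - g/R) x_{t-1} < 0`, which makes the switching
quantity negative at every step.
-/

/-- For `β → ∞` all traders remain chartists as long as this stays below the cost `C` of the
fundamental predictor. -/
noncomputable def switchingQuantity (R g v A s xPrev xCur : ℝ) : ℝ :=
  (R * xPrev - xCur - A * s) * ((g - v) / A) * xPrev

theorem switchingQuantity_neg {R g v A s xPrev xCur : ℝ} (hvg : v < g) (hA : 0 < A)
    (hs : 0 ≤ s) (hPrev : 0 < xPrev) (hgrowth : R * xPrev < xCur) :
    switchingQuantity R g v A s xPrev xCur < 0 := by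
  have hexcess : R * xPrev - xCur - A * s < 0 := by nlinarith
  have hweight : 0 < (g - v) / A := div_pos (sub_pos.mpr hvg) hA
  exact mul_neg_of_neg_of_pos (mul_neg_of_neg_of_pos hexcess hweight) hPrev

theorem lt_div_of_sq_lt {R g : ℝ} (hR : 0 < R) (hg : R ^ 2 < g) : R < g / R := by
  rw [lt_div_iff₀ hR]
  nlinarith

theorem ared_unbounded_dynamics_general
    (R g v A s C x0 : ℝ) (hR : 1 < R) (hg : R ^ 2 < g)
    (hvg : v < g) (hA : 0 < A) (hs : 0 ≤ s) (hC : 0 < C)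
    (hx0 : 0 < x0)
    (x : ℕ → ℝ) (hx : ∀ t : ℕ, x t = x0 * (g / R) ^ t) :
    Filter.Tendsto x Filter.atTop Filter.atTop ∧
      ∀ t : ℕ, 1 ≤ t →
        (R * x (t - 1) - x t - A * s) * ((g - v) / A) * x (t - 1) < 0 ∧
        (R * x (t - 1) - x t - A * s) * ((g - v) / A) * x (t - 1) < C := by
  have hR_lt : R < g / R := lt_div_of_sq_lt (by linarith) hg
  have hgrowth : 1 < g / R := by linarith
  have hx_pos : ∀ t, 0 < x t := fun t => by
    rw [hx t]; exact mul_pos hx0 (pow_pos (by linarith) t)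
  have hx_succ : ∀ t, x (t + 1) = g / R * x t := fun t => by rw [hx, hx, pow_succ]; ring
  refine ⟨funext hx ▸ (tendsto_pow_atTop_atTop_of_one_lt hgrowth).const_mul_atTop hx0, ?_⟩
  intro t ht
  obtain ⟨k, rfl⟩ : ∃ k, t = k + 1 := ⟨t - 1, by omega⟩
  have hneg : switchingQuantity R g v A s (x k) (x (k + 1)) < 0 :=
    switchingQuantity_neg hvg hA hs (hx_pos k)
      (by rw [hx_succ]; exact mul_lt_mul_of_pos_right hR_lt (hx_pos k))
  exact ⟨hneg, hneg.trans hC⟩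

/-- Part 4 of Lemma 3 (unbounded dynamics for `g > R²`): along the orbit
`x_t = x₀ (g/R)^t` with `x₀ > 0`, the price deviation diverges to `+∞` and the
switching quantity `(R x_{t-1} - x_t - As)((g-v)/A) x_{t-1}` stays strictly
negative (in particular below `C`), so in the limit of infinite intensity of
choice all traders remain chartists forever. -/
theorem ared_unbounded_dynamics
    (R g v A s C x0 : ℝ) (hR : 1 < R) (hg : R ^ 2 < g)
    (hv0 : 0 ≤ v) (hvg : v < g) (hA : 0 < A) (hs : 0 ≤ s) (hC : 0 < C)
    (hx0 : 0 < x0)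
    (x : ℕ → ℝ) (hx : ∀ t : ℕ, x t = x0 * (g / R) ^ t) :
    Filter.Tendsto x Filter.atTop Filter.atTop ∧
      ∀ t : ℕ, 1 ≤ t →
        (R * x (t - 1) - x t - A * s) * ((g - v) / A) * x (t - 1) < 0 ∧
        (R * x (t - 1) - x t - A * s) * ((g - v) / A) * x (t - 1) < C :=
  ared_unbounded_dynamics_general R g v A s C x0 hR hg hvg hA hs hC hx0 x hx
end

section
/- Let R > 0, A > 0, s ∈ ℝ, m ∈ (−1,1), and f₁, f₂ ∈ ℝ. Define the unconstrained clearing deviation x⁰ = (1/(2R))·((1+m)·f₁ + (1−m)·f₂), the clearing deviation when type-1 traders are excluded x¹ = (1/R)·(f₂ − A·s·(1+m)/(1−m)), and the unconstrained type-1 demand z₁ = ((1−m)/2)·(f₁ − f₂)/A + s. Then x¹ − x⁰ = −(A/R)·((1+m)/(1−m))·z₁. In particular, if z₁ < 0 (type-1 traders would go short), then x¹ > x⁰: the price established when type-1 traders are prohibited from going short is strictly higher than the unconstrained price. -/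
theorem excluded_sub_clearing_eq_neg_mul_demand (R A s m f1 f2 : ℝ) (hA : A ≠ 0) (hm : m ≠ 1) :
    (1 / R) * (f2 - A * s * (1 + m) / (1 - m)) - (1 / (2 * R)) * ((1 + m) * f1 + (1 - m) * f2) =
      -(A / R) * ((1 + m) / (1 - m)) * (((1 - m) / 2) * (f1 - f2) / A + s) := by
  have h1m : 1 - m ≠ 0 := sub_ne_zero.mpr hm.symm
  field_simp
  ring

/-- From the proof of Lemma 4: the difference between the clearing deviation
when type-1 traders are excluded and the unconstrained clearing deviation
equals `-(A/R)((1+m)/(1-m)) z₁`; in particular if type-1 traders would go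
short (`z₁ < 0`), the constrained price is strictly higher. -/
theorem ared_constrained_price_higher
    (R A s m f1 f2 : ℝ) (hR : 0 < R) (hA : 0 < A)
    (hm : m ∈ Set.Ioo (-1 : ℝ) 1)
    (x0 x1 z1 : ℝ)
    (hx0 : x0 = (1 / (2 * R)) * ((1 + m) * f1 + (1 - m) * f2))
    (hx1 : x1 = (1 / R) * (f2 - A * s * (1 + m) / (1 - m)))
    (hz1 : z1 = ((1 - m) / 2) * (f1 - f2) / A + s) :
    x1 - x0 = -(A / R) * ((1 + m) / (1 - m)) * z1 ∧
      (z1 < 0 → x0 < x1) := by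
  obtain ⟨hm_gt, hm_lt⟩ := hm
  have hgap : x1 - x0 = -(A / R) * ((1 + m) / (1 - m)) * z1 := by
    subst hx0 hx1 hz1
    exact excluded_sub_clearing_eq_neg_mul_demand R A s m f1 f2 hA.ne' hm_lt.ne
  refine ⟨hgap, fun hz1_neg => ?_⟩
  have hcoef : 0 < A / R * ((1 + m) / (1 - m)) :=
    mul_pos (div_pos hA hR) (div_pos (by linarith) (by linarith))
  linarith [mul_neg_of_pos_of_neg hcoef hz1_neg]
end

section
/- Let R > 1, 0 ≤ v < 1, g > R, A > 0, C > 0, and 0 < s < s_BC := sqrt(C·(g−R)²/(A·(g−v)·(g−1))). Then 1 − (A·s²/C)·(g−v)·(g−1)/(g−R)² ∈ (0,1), so β_BC^{(−)} := (1/C)·log((R−v)/(g−R))·(1 − (A·s²/C)·(g−v)·(g−1)/(g−R)²)^{−1} is well defined; and if moreover g < 2R − v, then β_BC^{(−)} > β_TR := (1/C)·log((R−v)/(g−R)) > 0. -/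
/-! The condition `s < s_BC` is exactly `t < 1` for the positive term
`t = (A s²/C)(g-v)(g-1)/(g-R)²`, so `1 - t ∈ (0,1)`; and `g < 2R - v` says
`(R-v)/(g-R) > 1`, so `β_TR > 0`, and dividing it by `1 - t < 1` makes it larger. -/

open Set

lemma mul_sq_div_lt_one_of_lt_sqrt_div {a b s : ℝ} (ha : 0 < a) (hb : 0 < b) (hs : 0 ≤ s)
    (h : s < √(a / b)) : b * s ^ 2 / a < 1 := by
  rw [div_lt_one ha, ← lt_div_iff₀' hb]
  exact (Real.lt_sqrt hs).1 h

section OrderedField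

variable {α : Type*} [Field α] [LinearOrder α] [IsStrictOrderedRing α]

lemma one_sub_mem_Ioo_zero_one {t : α} (ht : t ∈ Ioo (0 : α) 1) : 1 - t ∈ Ioo (0 : α) 1 :=
  ⟨sub_pos.2 ht.2, sub_lt_self 1 ht.1⟩

lemma lt_mul_inv_of_mem_Ioo_zero_one {b x : α} (hb : 0 < b) (hx : x ∈ Ioo (0 : α) 1) :
    b < b * x⁻¹ :=
  lt_mul_of_one_lt_right hb ((one_lt_inv₀ hx.1).2 hx.2)

end OrderedField

theorem ared_betaBC_minus_general
    (R v g A C s : ℝ) (hR : 1 < R) (hv1 : v < 1)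
    (hgR : R < g) (hA : 0 < A) (hC : 0 < C) (hs : 0 < s)
    (hsBC : s < Real.sqrt (C * (g - R) ^ 2 / (A * (g - v) * (g - 1)))) :
    (1 - (A * s ^ 2 / C) * (g - v) * (g - 1) / (g - R) ^ 2) ∈
        Set.Ioo (0 : ℝ) 1 ∧
      (g < 2 * R - v →
        (0 : ℝ) < (1 / C) * Real.log ((R - v) / (g - R)) ∧
        (1 / C) * Real.log ((R - v) / (g - R)) <
          (1 / C) * Real.log ((R - v) / (g - R)) *
            (1 - (A * s ^ 2 / C) * (g - v) * (g - 1) / (g - R) ^ 2)⁻¹) := by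
  have hgR' : 0 < g - R := sub_pos.2 hgR
  have hden : 0 < A * (g - v) * (g - 1) := by
    have : 0 < g - v := by linarith
    have : 0 < g - 1 := by linarith
    positivity
  have hterm : (A * s ^ 2 / C) * (g - v) * (g - 1) / (g - R) ^ 2
      = A * (g - v) * (g - 1) * s ^ 2 / (C * (g - R) ^ 2) := by
    field_simp
  have hmem : (1 - (A * s ^ 2 / C) * (g - v) * (g - 1) / (g - R) ^ 2) ∈ Ioo (0 : ℝ) 1 := by
    rw [hterm]
    exact one_sub_mem_Ioo_zero_one ⟨by positivity,
      mul_sq_div_lt_one_of_lt_sqrt_div (by positivity) hden hs.le hsBC⟩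
  refine ⟨hmem, fun hg => ?_⟩
  have hβTR : 0 < 1 / C * Real.log ((R - v) / (g - R)) :=
    mul_pos (one_div_pos.2 hC) (Real.log_pos ((one_lt_div hgR').2 (by linarith)))
  exact ⟨hβTR, lt_mul_inv_of_mem_Ioo_zero_one hβTR hmem⟩

/-- Point 2(d) of Lemma 4: for supply below the threshold
`s_BC = sqrt(C(g-R)²/(A(g-v)(g-1)))` the quantity
`1 - (As²/C)(g-v)(g-1)/(g-R)²` lies in `(0,1)`, so the border-collision value
`β_BC⁻` is well defined, and if moreover `g < 2R - v` then
`β_BC⁻ > β_TR > 0`. -/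
theorem ared_betaBC_minus
    (R v g A C s : ℝ) (hR : 1 < R) (hv0 : 0 ≤ v) (hv1 : v < 1)
    (hgR : R < g) (hA : 0 < A) (hC : 0 < C) (hs : 0 < s)
    (hsBC : s < Real.sqrt (C * (g - R) ^ 2 / (A * (g - v) * (g - 1)))) :
    (1 - (A * s ^ 2 / C) * (g - v) * (g - 1) / (g - R) ^ 2) ∈
        Set.Ioo (0 : ℝ) 1 ∧
      (g < 2 * R - v →
        (0 : ℝ) < (1 / C) * Real.log ((R - v) / (g - R)) ∧
        (1 / C) * Real.log ((R - v) / (g - R)) <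
          (1 / C) * Real.log ((R - v) / (g - R)) *
            (1 - (A * s ^ 2 / C) * (g - v) * (g - 1) / (g - R) ^ 2)⁻¹) :=
  ared_betaBC_minus_general R v g A C s hR hv1 hgR hA hC hs hsBC
end

section
/- Let R > 1, 0 ≤ v < 1, C > 0 and β > 0; set m̄⁰ = tanh(−β·C/2), γ₁ = ((1+m̄⁰)·v + 3·(1−m̄⁰))/(2R), γ₂ = −(1−m̄⁰)/R. Then: (1) if R ≥ 2, every complex root of z² − γ₁·z − γ₂ has modulus strictly less than 1, for every β > 0; (2) if R < 2, every complex root of z² − γ₁·z − γ₂ has modulus strictly less than 1 if and only if β < β_NS := (1/C)·log(R/(2−R)), and at β = β_NS the two roots are non-real complex conjugates of modulus exactly 1. -/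
/-!
By the Schur–Cohn (Jury) conditions, the roots of a real quadratic `z² - a z - b` lie in the open
unit disk iff `|b| < 1` and `|a| < 1 - b`. For `γ₁, γ₂` built from a fraction difference
`m ∈ [-1, 1]` and `0 ≤ v ≤ 1`, the second condition always holds and the first reads
`1 - R < m = tanh (-βC/2)`. This is automatic when `R ≥ 2`; for `R < 2`, monotonicity of `tanh`
turns it into `β < β_NS`, where `-β_NS C/2 = artanh (1 - R)`. At `β_NS` we get `γ₂ = -1` and
`0 ≤ γ₁ < 2`, so the discriminant is negative and the roots are conjugates with product `1`.
-/

open Real Set ComplexConjugate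

theorem sq_sub_mul_sub_eq_zero_iff {K : Type*} [CommRing K] [NoZeroDivisors K] {a b z₁ z₂ : K}
    (hsum : z₁ + z₂ = a) (hprod : z₁ * z₂ = -b) (z : K) :
    z ^ 2 - a * z - b = 0 ↔ z = z₁ ∨ z = z₂ := by
  rw [show z ^ 2 - a * z - b = (z - z₁) * (z - z₂) by linear_combination z * hsum - hprod,
    mul_eq_zero, sub_eq_zero, sub_eq_zero]

theorem exists_add_eq_mul_eq_neg_of_discrim_nonneg {a b : ℝ} (h : 0 ≤ a ^ 2 + 4 * b) :
    ∃ r₁ r₂ : ℝ, r₁ + r₂ = a ∧ r₁ * r₂ = -b := by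
  have hs := Real.sq_sqrt h
  exact ⟨(a + √(a ^ 2 + 4 * b)) / 2, (a - √(a ^ 2 + 4 * b)) / 2, by ring,
    by linear_combination (-1 / 4 : ℝ) * hs⟩

theorem exists_conj_roots_of_discrim_neg {a b : ℝ} (h : a ^ 2 + 4 * b < 0) :
    ∃ z : ℂ, z.im ≠ 0 ∧ Complex.normSq z = -b ∧
      ∀ w : ℂ, w ^ 2 - a * w - b = 0 ↔ w = z ∨ w = conj z := by
  set y := √(-(a ^ 2 + 4 * b)) / 2
  have hy : y ^ 2 = -(a ^ 2 + 4 * b) / 4 := by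
    rw [div_pow, Real.sq_sqrt (by linarith)]; norm_num
  set z : ℂ := ↑(a / 2) + ↑y * Complex.I
  have hnormSq : Complex.normSq z = -b := by rw [Complex.normSq_add_mul_I, hy]; ring
  have hy₀ : 0 < y := half_pos (Real.sqrt_pos.mpr (neg_pos.mpr h))
  refine ⟨z, by simpa [z] using hy₀.ne', hnormSq, sq_sub_mul_sub_eq_zero_iff ?_ ?_⟩
  · rw [Complex.add_conj]; simp [z]; ring
  · rw [Complex.mul_conj, hnormSq]; push_cast; ring

theorem abs_lt_one_and_abs_lt_one_iff (r₁ r₂ : ℝ) :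
    |r₁| < 1 ∧ |r₂| < 1 ↔ |r₁ * r₂| < 1 ∧ |r₁ + r₂| < 1 + r₁ * r₂ := by
  -- `1 ± (r₁ + r₂) + r₁ * r₂ = (1 ± r₁) * (1 ± r₂)`
  simp only [abs_lt]
  constructor
  · rintro ⟨⟨h₁, h₁'⟩, h₂, h₂'⟩
    refine ⟨⟨?_, ?_⟩, ?_, ?_⟩ <;> nlinarith
  · rintro ⟨⟨hp, hp'⟩, hs, hs'⟩
    refine ⟨⟨?_, ?_⟩, ?_, ?_⟩ <;> nlinarith

theorem forall_roots_norm_lt_one_iff (a b : ℝ) :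
    (∀ z : ℂ, z ^ 2 - a * z - b = 0 → ‖z‖ < 1) ↔ |b| < 1 ∧ |a| < 1 - b := by
  rcases le_or_gt 0 (a ^ 2 + 4 * b) with hd | hd
  · obtain ⟨r₁, r₂, hsum, hprod⟩ := exists_add_eq_mul_eq_neg_of_discrim_nonneg hd
    have hroots := sq_sub_mul_sub_eq_zero_iff (K := ℂ) (a := a) (b := b) (z₁ := r₁) (z₂ := r₂)
      (by exact_mod_cast hsum) (by exact_mod_cast hprod)
    simp only [hroots, forall_eq_or_imp, forall_eq, Complex.norm_real, Real.norm_eq_abs]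
    rw [abs_lt_one_and_abs_lt_one_iff, hsum, hprod, abs_neg, ← sub_eq_add_neg]
  · obtain ⟨z, -, hnormSq, hroots⟩ := exists_conj_roots_of_discrim_neg hd
    simp only [hroots, forall_eq_or_imp, forall_eq, Complex.norm_conj, and_self]
    rw [← sq_lt_one_iff₀ (norm_nonneg z), ← Complex.normSq_eq_norm_sq, hnormSq]
    have hb : b < 0 := by nlinarith
    rw [abs_of_neg hb]
    -- `a ^ 2 < -4 * b ≤ (1 - b) ^ 2`
    refine ⟨fun h => ⟨h, abs_lt_of_sq_lt_sq (by nlinarith) (by linarith)⟩, And.left⟩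

noncomputable def rocGamma₁ (R v m : ℝ) : ℝ := ((1 + m) * v + 3 * (1 - m)) / (2 * R)

noncomputable def rocGamma₂ (R m : ℝ) : ℝ := -(1 - m) / R

section

variable {R v m : ℝ}

theorem rocGamma₁_nonneg_and_lt (hR : 1 < R) (hv₀ : 0 ≤ v) (hv₁ : v ≤ 1) (hm₀ : -1 ≤ m)
    (hm₁ : m ≤ 1) : 0 ≤ rocGamma₁ R v m ∧ rocGamma₁ R v m < 1 - rocGamma₂ R m := by
  unfold rocGamma₁ rocGamma₂
  have hm₀' : 0 ≤ 1 + m := by linarith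
  have hm₁' : 0 ≤ 1 - m := by linarith
  refine ⟨by positivity, ?_⟩
  calc ((1 + m) * v + 3 * (1 - m)) / (2 * R) < (2 * R + 2 * (1 - m)) / (2 * R) := by
        refine div_lt_div_of_pos_right ?_ (by positivity)
        nlinarith [mul_le_mul_of_nonneg_left hv₁ hm₀']
    _ = 1 - -(1 - m) / R := by field_simp; ring

theorem rocGamma_schurCohn_iff (hR : 1 < R) (hv₀ : 0 ≤ v) (hv₁ : v ≤ 1) (hm₀ : -1 ≤ m)
    (hm₁ : m ≤ 1) :
    |rocGamma₂ R m| < 1 ∧ |rocGamma₁ R v m| < 1 - rocGamma₂ R m ↔ 1 - R < m := by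
  obtain ⟨hγ₀, hγ₁⟩ := rocGamma₁_nonneg_and_lt hR hv₀ hv₁ hm₀ hm₁
  rw [abs_of_nonneg hγ₀, and_iff_left hγ₁, rocGamma₂, abs_div, abs_neg,
    abs_of_nonneg (sub_nonneg.mpr hm₁), abs_of_pos (by linarith), div_lt_one (by linarith),
    sub_lt_comm]

end

theorem lt_tanh_iff_artanh_lt {x y : ℝ} (hy : y ∈ Ioo (-1) 1) : y < tanh x ↔ artanh y < x := by
  rw [← artanh_lt_artanh_iff hy ⟨neg_one_lt_tanh x, tanh_lt_one x⟩, artanh_tanh]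

theorem artanh_one_sub {R : ℝ} (hR₀ : 0 < R) (hR₂ : R < 2) :
    artanh (1 - R) = -log (R / (2 - R)) / 2 := by
  rw [artanh_eq_half_log ⟨by linarith, by linarith⟩, ← log_inv, inv_div]
  ring_nf

/-- Lemma 5 of the paper (fundamentalists vs ROC traders, L = 2): with
`γ₁(β) = ((1+m̄⁰)v + 3(1-m̄⁰))/(2R)`, `γ₂(β) = -(1-m̄⁰)/R`,
`m̄⁰ = tanh(-βC/2)`: (1) if `R ≥ 2` every complex root of `z² - γ₁z - γ₂` has
modulus < 1 for every `β > 0`; (2) if `R < 2` this holds iff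
`β < β_NS = (1/C) log(R/(2-R))`, and at `β = β_NS` the two roots are non-real
complex conjugates of modulus 1. -/
theorem ared_roc_fundamental_stability
    (R v C : ℝ) (hR : 1 < R) (hv0 : 0 ≤ v) (hv1 : v < 1) (hC : 0 < C)
    (mb γ1 γ2 : ℝ → ℝ)
    (hmb : ∀ β, mb β = Real.tanh (-β * C / 2))
    (hγ1 : ∀ β, γ1 β = ((1 + mb β) * v + 3 * (1 - mb β)) / (2 * R))
    (hγ2 : ∀ β, γ2 β = -(1 - mb β) / R)
    (βNS : ℝ) (hβNS : βNS = (1 / C) * Real.log (R / (2 - R))) :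
    (2 ≤ R → ∀ β : ℝ, 0 < β →
      ∀ z : ℂ, z ^ 2 - (γ1 β : ℂ) * z - (γ2 β : ℂ) = 0 →
        ‖z‖ < 1) ∧
    (R < 2 →
      (∀ β : ℝ, 0 < β →
        ((∀ z : ℂ, z ^ 2 - (γ1 β : ℂ) * z - (γ2 β : ℂ) = 0 →
            ‖z‖ < 1) ↔ β < βNS)) ∧
      ∃ z : ℂ, z.im ≠ 0 ∧ ‖z‖ = 1 ∧
        ∀ w : ℂ, (w ^ 2 - (γ1 βNS : ℂ) * w - (γ2 βNS : ℂ) = 0 ↔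
          (w = z ∨ w = starRingEnd ℂ z))) := by
  have hγ₁ : ∀ β, γ1 β = rocGamma₁ R v (mb β) := hγ1
  have hγ₂ : ∀ β, γ2 β = rocGamma₂ R (mb β) := hγ2
  have hmb₀ β : -1 ≤ mb β := hmb β ▸ (neg_one_lt_tanh _).le
  have hmb₁ β : mb β ≤ 1 := hmb β ▸ (tanh_lt_one _).le
  have stable_iff β : (∀ z : ℂ, z ^ 2 - (γ1 β : ℂ) * z - (γ2 β : ℂ) = 0 → ‖z‖ < 1) ↔
      1 - R < tanh (-β * C / 2) := by
    rw [forall_roots_norm_lt_one_iff, hγ₁, hγ₂, ← hmb]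
    exact rocGamma_schurCohn_iff hR hv0 hv1.le (hmb₀ β) (hmb₁ β)
  refine ⟨fun _ β _ => (stable_iff β).mpr (by linarith [neg_one_lt_tanh (-β * C / 2)]),
    fun hR₂ => ?_⟩
  have h1R : 1 - R ∈ Ioo (-1) 1 := ⟨by linarith, by linarith⟩
  have hβNS_eq : -βNS * C / 2 = artanh (1 - R) := by
    rw [artanh_one_sub (by linarith) hR₂, hβNS]; field_simp
  refine ⟨fun β _ => ?_, ?_⟩
  · rw [stable_iff, lt_tanh_iff_artanh_lt h1R, ← hβNS_eq, div_lt_div_iff_of_pos_right two_pos,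
      neg_mul, neg_mul, neg_lt_neg_iff, mul_lt_mul_iff_left₀ hC]
  · have hm : mb βNS = 1 - R := by rw [hmb, hβNS_eq, tanh_artanh h1R]
    have hγ₂NS : γ2 βNS = -1 := by rw [hγ₂, hm, rocGamma₂]; field_simp; ring
    obtain ⟨hγ₁_nonneg, hγ₁_lt⟩ := rocGamma₁_nonneg_and_lt hR hv0 hv1.le (hmb₀ βNS) (hmb₁ βNS)
    rw [← hγ₁] at hγ₁_nonneg
    rw [← hγ₁, ← hγ₂, hγ₂NS] at hγ₁_lt
    obtain ⟨z, hz_im, hz_normSq, hroots⟩ :=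
      exists_conj_roots_of_discrim_neg (a := γ1 βNS) (b := γ2 βNS) (by nlinarith)
    refine ⟨z, hz_im, ?_, hroots⟩
    rw [Complex.norm_def, hz_normSq, hγ₂NS, neg_neg, sqrt_one]
end

section
/- Let R > 1, 0 ≤ v < 1, C > 0 and β ≥ 0; set m̄⁰ = tanh(−β·C/2), γ₁ = ((1+m̄⁰)·v + 3·(1−m̄⁰))/(2R), γ₂ = −(1−m̄⁰)/R. Then 1 − γ₁ − γ₂ > 0 and 1 + γ₁ − γ₂ > 0 for every β ≥ 0; consequently neither 1 nor −1 is ever a root of z² − γ₁·z − γ₂, so the fundamental equilibrium can undergo neither a transcritical/saddle-node nor a flip (period-doubling) bifurcation. -/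
/-!
Clearing denominators, `1 - γ₁ - γ₂ = (2R - (1+m)v - (1-m))/(2R)`, and
`(1+m)v + (1-m) ≤ (1+m) + (1-m) = 2 < 2R` as soon as `1 + m ≥ 0` and `v ≤ 1`; while
`1 + γ₁ - γ₂` is `1` plus two nonnegative terms when `|m| ≤ 1` and `v ≥ 0`.
Both requirements on `m = tanh(-βC/2)` hold because `|tanh| < 1`.
-/

namespace ARED

noncomputable def gamma₁ (R v m : ℝ) : ℝ := ((1 + m) * v + 3 * (1 - m)) / (2 * R)

noncomputable def gamma₂ (R m : ℝ) : ℝ := -(1 - m) / R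

variable {R v m : ℝ}

lemma one_sub_gamma₁_sub_gamma₂_pos (hR : 1 < R) (hv : v ≤ 1) (hm : -1 ≤ m) :
    0 < 1 - gamma₁ R v m - gamma₂ R m := by
  have hR0 : 0 < R := by linarith
  have hnum : (1 + m) * v + (1 - m) < 2 * R := by
    nlinarith [mul_le_mul_of_nonneg_left hv (by linarith : 0 ≤ 1 + m)]
  have hform : 1 - gamma₁ R v m - gamma₂ R m = (2 * R - ((1 + m) * v + (1 - m))) / (2 * R) := by
    unfold gamma₁ gamma₂
    field_simp
    ring
  rw [hform]
  exact div_pos (by linarith) (by linarith)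

lemma one_add_gamma₁_sub_gamma₂_pos (hR : 0 < R) (hv : 0 ≤ v) (hm : m ∈ Set.Icc (-1) 1) :
    0 < 1 + gamma₁ R v m - gamma₂ R m := by
  obtain ⟨hm₁, hm₂⟩ := hm
  have hγ₁ : 0 ≤ gamma₁ R v m := by
    have : 0 ≤ (1 + m) * v := mul_nonneg (by linarith) hv
    exact div_nonneg (by linarith) (by linarith)
  have hγ₂ : gamma₂ R m ≤ 0 := by
    rw [gamma₂, neg_div]
    exact neg_nonpos.mpr (div_nonneg (by linarith) hR.le)
  linarith

end ARED

theorem ared_roc_no_fold_no_flip_general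
    (R v C β : ℝ) (hR : 1 < R) (hv0 : 0 ≤ v) (hv1 : v < 1)
    (mb γ1 γ2 : ℝ)
    (hmb : mb = Real.tanh (-β * C / 2))
    (hγ1 : γ1 = ((1 + mb) * v + 3 * (1 - mb)) / (2 * R))
    (hγ2 : γ2 = -(1 - mb) / R) :
    0 < 1 - γ1 - γ2 ∧ 0 < 1 + γ1 - γ2 ∧
      (1 : ℝ) ^ 2 - γ1 * 1 - γ2 ≠ 0 ∧
      (-1 : ℝ) ^ 2 - γ1 * (-1) - γ2 ≠ 0 := by
  obtain rfl : γ1 = ARED.gamma₁ R v mb := hγ1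
  obtain rfl : γ2 = ARED.gamma₂ R mb := hγ2
  have hm : mb ∈ Set.Icc (-1) 1 :=
    hmb ▸ ⟨(Real.neg_one_lt_tanh _).le, (Real.tanh_lt_one _).le⟩
  have hfold := ARED.one_sub_gamma₁_sub_gamma₂_pos hR hv1.le hm.1
  have hflip := ARED.one_add_gamma₁_sub_gamma₂_pos (zero_lt_one.trans hR) hv0 hm
  refine ⟨hfold, hflip, ?_, ?_⟩
  · exact ne_of_gt (by linarith)
  · exact ne_of_gt (by linarith)

/-- Exclusion steps in the proof of Lemma 5: with
`γ₁ = ((1+m̄⁰)v + 3(1-m̄⁰))/(2R)` and `γ₂ = -(1-m̄⁰)/R`,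
`m̄⁰ = tanh(-βC/2)`, both `1 - γ₁ - γ₂ > 0` and `1 + γ₁ - γ₂ > 0`; hence
neither `1` nor `-1` is a root of `z² - γ₁ z - γ₂`, ruling out
transcritical/saddle-node and flip bifurcations of the fundamental
equilibrium. -/
theorem ared_roc_no_fold_no_flip
    (R v C β : ℝ) (hR : 1 < R) (hv0 : 0 ≤ v) (hv1 : v < 1)
    (hC : 0 < C) (hβ : 0 ≤ β)
    (mb γ1 γ2 : ℝ)
    (hmb : mb = Real.tanh (-β * C / 2))
    (hγ1 : γ1 = ((1 + mb) * v + 3 * (1 - mb)) / (2 * R))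
    (hγ2 : γ2 = -(1 - mb) / R) :
    0 < 1 - γ1 - γ2 ∧ 0 < 1 + γ1 - γ2 ∧
      (1 : ℝ) ^ 2 - γ1 * 1 - γ2 ≠ 0 ∧
      (-1 : ℝ) ^ 2 - γ1 * (-1) - γ2 ≠ 0 :=
  ared_roc_no_fold_no_flip_general R v C β hR hv0 hv1 mb γ1 γ2 hmb hγ1 hγ2
end
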